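/- arXiv:2301.05956 — 2 statements merged into one kernel-verified Lean document; each statement's English description precedes it below -/
import Mathlib

section
/- For every n ≥ 1, all linear orders L₁,…,L_n, every 1 ≤ j ≤ n, and every decomposition L_j ≅ L_{j1} + L_{j2} into an order sum, one has (L_{j2} + Ξ(L₁,…,L_n) + L_{j1}) · ζ ≅ Ξ(L₁,…,L_n). -/
/-!
Pick the coloured model `M = ζ · (𝟏 + ℚ)`: in every block the point `𝟏` gets the colour `j`
and the copy of `ℚ` keeps the colouring `f`. Each colour class of `M` is dense and unbounded,
so a colour-preserving back-and-forth argument identifies `M` with `(ℚ, f)`. Summing `L` along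
this identification gives `Ξ ≅ (L_j + Ξ) · ζ = (L_{j1} + L_{j2} + Ξ) · ζ`, and shifting every
`L_{j1}` to the end of the preceding block turns this into `(L_{j2} + Ξ + L_{j1}) · ζ`.
-/

def DenseQ (D : Set ℚ) : Prop := ∀ a b : ℚ, a < b → ∃ q ∈ D, a < q ∧ q < b

open Sum

namespace Sigma.Lex

variable {ι : Type*} [LinearOrder ι] {F : ι → Type*} [∀ i, LinearOrder (F i)]

theorem toLex_lt_toLex_of_fst_lt {i i' : ι} (x : F i) (x' : F i') (h : i < i') :
    toLex (⟨i, x⟩ : Σ i, F i) < toLex ⟨i', x'⟩ :=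
  Sigma.Lex.left _ _ h

theorem toLex_mk_lt_toLex_mk {i : ι} {x x' : F i} (h : x < x') :
    toLex (⟨i, x⟩ : Σ i, F i) < toLex ⟨i, x'⟩ :=
  Sigma.Lex.right _ _ h

theorem strictMono_of {γ : Type*} [Preorder γ] {φ : (Σₗ i, F i) → γ}
    (hlt : ∀ i i' x x', i < i' → φ (toLex ⟨i, x⟩) < φ (toLex ⟨i', x'⟩))
    (hfib : ∀ i, StrictMono fun x => φ (toLex ⟨i, x⟩)) : StrictMono φ := by
  rintro ⟨i, x⟩ ⟨i', x'⟩ h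
  obtain h | ⟨hi, h⟩ := Sigma.Lex.lt_def.1 h
  · exact hlt _ _ _ _ h
  · dsimp only at hi h
    subst hi
    exact hfib i h

end Sigma.Lex

theorem Sum.Lex.strictMono_of {α β γ : Type*} [LinearOrder α] [LinearOrder β] [Preorder γ]
    {φ : α ⊕ₗ β → γ} (hl : StrictMono fun a => φ (toLex (inl a)))
    (hr : StrictMono fun b => φ (toLex (inr b)))
    (hlr : ∀ a b, φ (toLex (inl a)) < φ (toLex (inr b))) : StrictMono φ := by
  rintro (a | b) (a' | b') h
  · exact hl (Sum.Lex.inl_lt_inl_iff.1 h)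
  · exact hlr a b'
  · exact absurd h Sum.Lex.not_inr_lt_inl
  · exact hr (Sum.Lex.inr_lt_inr_iff.1 h)

namespace OrderIso

open Sigma.Lex

variable {ι κ : Type*} [LinearOrder ι] [LinearOrder κ]

noncomputable def sigmaLexCongr {F : ι → Type*} {G : κ → Type*} [∀ i, LinearOrder (F i)]
    [∀ k, LinearOrder (G k)] (e : ι ≃o κ) (g : ∀ i, F i ≃o G (e i)) :
    (Σₗ i, F i) ≃o Σₗ k, G k :=
  StrictMono.orderIsoOfSurjective (fun p => toLex ⟨e p.1, g p.1 p.2⟩)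
    (strictMono_of (fun _ _ _ _ h => toLex_lt_toLex_of_fst_lt _ _ (e.strictMono h))
      fun i _ _ h => toLex_mk_lt_toLex_mk ((g i).strictMono h))
    (by
      rintro ⟨k, y⟩
      obtain ⟨i, rfl⟩ := e.surjective k
      exact ⟨toLex ⟨i, (g i).symm y⟩,
        congrArg (fun y => toLex (⟨e i, y⟩ : Σ k, G k)) ((g i).apply_symm_apply y)⟩)

noncomputable def sigmaLexAssoc {J : ι → Type*} [∀ i, LinearOrder (J i)] (F : ∀ i, J i → Type*)
    [∀ i j, LinearOrder (F i j)] :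
    (Σₗ p : (Σₗ i, J i), F p.1 p.2) ≃o Σₗ i, Σₗ j : J i, F i j :=
  StrictMono.orderIsoOfSurjective (fun p => toLex ⟨p.1.1, toLex ⟨p.1.2, p.2⟩⟩)
    (strictMono_of
      (fun ⟨i, j⟩ ⟨i', j'⟩ x x' h => by
        obtain h | ⟨hi, h⟩ := Sigma.Lex.lt_def.1 h
        · exact toLex_lt_toLex_of_fst_lt _ _ h
        · dsimp only at hi h
          subst hi
          exact toLex_mk_lt_toLex_mk (toLex_lt_toLex_of_fst_lt _ _ h))
      fun _ _ _ h => toLex_mk_lt_toLex_mk (toLex_mk_lt_toLex_mk h))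
    fun ⟨i, j, x⟩ => ⟨toLex ⟨toLex ⟨i, j⟩, x⟩, rfl⟩

noncomputable def sigmaLexSumLexDistrib {α β : Type*} [LinearOrder α] [LinearOrder β]
    (F : α ⊕ₗ β → Type*) [∀ x, LinearOrder (F x)] :
    (Σₗ x, F x) ≃o (Σₗ a, F (toLex (inl a))) ⊕ₗ Σₗ b, F (toLex (inr b)) :=
  StrictMono.orderIsoOfSurjective
    (fun p => Sum.rec (motive := fun s => F (toLex s) → _)
      (fun a x => toLex (inl (toLex ⟨a, x⟩))) (fun b x => toLex (inr (toLex ⟨b, x⟩)))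
      (ofLex p.1) p.2)
    (strictMono_of
      (by
        rintro (a | b) (a' | b') x x' h
        · exact Sum.Lex.inl_lt_inl_iff.2
            (toLex_lt_toLex_of_fst_lt _ _ (Sum.Lex.inl_lt_inl_iff.1 h))
        · exact Sum.Lex.inl_lt_inr _ _
        · exact absurd h Sum.Lex.not_inr_lt_inl
        · exact Sum.Lex.inr_lt_inr_iff.2
            (toLex_lt_toLex_of_fst_lt _ _ (Sum.Lex.inr_lt_inr_iff.1 h)))
      (by
        rintro (a | b) x x' h
        · exact Sum.Lex.inl_lt_inl_iff.2 (toLex_mk_lt_toLex_mk h)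
        · exact Sum.Lex.inr_lt_inr_iff.2 (toLex_mk_lt_toLex_mk h)))
    (by
      rintro (⟨a, x⟩ | ⟨b, x⟩)
      exacts [⟨toLex ⟨toLex (inl a), x⟩, rfl⟩, ⟨toLex ⟨toLex (inr b), x⟩, rfl⟩])

noncomputable def uniqueSigmaLex [Unique ι] (F : ι → Type*) [∀ i, LinearOrder (F i)] :
    (Σₗ i, F i) ≃o F default :=
  (StrictMono.orderIsoOfSurjective (fun x => toLex ⟨default, x⟩) (fun _ _ => toLex_mk_lt_toLex_mk)
    (by
      rintro ⟨i, x⟩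
      obtain rfl := Unique.eq_default i
      exact ⟨x, rfl⟩)).symm

noncomputable def sigmaLexCongrRight {F G : ι → Type*} [∀ i, LinearOrder (F i)]
    [∀ i, LinearOrder (G i)] (g : ∀ i, F i ≃o G i) : (Σₗ i, F i) ≃o Σₗ i, G i :=
  sigmaLexCongr (OrderIso.refl ι) g

noncomputable def sigmaLexEquivProdLex (X : Type*) [LinearOrder X] : (Σₗ _ : ι, X) ≃o ι ×ₗ X :=
  StrictMono.orderIsoOfSurjective (fun p => toLex (p.1, p.2))
    (strictMono_of (fun _ _ _ _ h => Prod.Lex.toLex_lt_toLex.2 (Or.inl h))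
      fun _ _ _ h => Prod.Lex.toLex_lt_toLex.2 (Or.inr ⟨rfl, h⟩))
    fun p => ⟨toLex ⟨(ofLex p).1, (ofLex p).2⟩, rfl⟩

noncomputable def sigmaLexIntSumLexComm (A B : Type*) [LinearOrder A] [LinearOrder B] :
    (Σₗ _ : ℤ, A ⊕ₗ B) ≃o Σₗ _ : ℤ, B ⊕ₗ A :=
  StrictMono.orderIsoOfSurjective
    (fun p => Sum.elim (fun a => toLex ⟨p.1, toLex (inr a)⟩)
      (fun b => toLex ⟨p.1 + 1, toLex (inl b)⟩) (ofLex p.2))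
    (strictMono_of
      (by
        rintro k k' (a | b) (a' | b') h
        · exact toLex_lt_toLex_of_fst_lt _ _ h
        · exact toLex_lt_toLex_of_fst_lt _ _ (show k < k' + 1 by omega)
        · obtain h | rfl := (Int.add_one_le_iff.2 h).lt_or_eq
          · exact toLex_lt_toLex_of_fst_lt _ _ h
          · exact toLex_mk_lt_toLex_mk (Sum.Lex.inl_lt_inr _ _)
        · exact toLex_lt_toLex_of_fst_lt _ _ (show k + 1 < k' + 1 by omega))
      fun k => Sum.Lex.strictMono_of
        (fun _ _ h => toLex_mk_lt_toLex_mk (Sum.Lex.inr_lt_inr_iff.2 h))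
        (fun _ _ h => toLex_mk_lt_toLex_mk (Sum.Lex.inl_lt_inl_iff.2 h))
        fun _ _ => toLex_lt_toLex_of_fst_lt _ _ (lt_add_one k))
    (by
      rintro ⟨k, b | a⟩
      · refine ⟨toLex ⟨k - 1, toLex (inr b)⟩, ?_⟩
        change toLex (⟨k - 1 + 1, toLex (inl b)⟩ : Σ _ : ℤ, B ⊕ₗ A) = toLex ⟨k, toLex (inl b)⟩
        rw [sub_add_cancel]
      · exact ⟨toLex ⟨k, toLex (inl a)⟩, rfl⟩)

end OrderIso

section Coloring

variable {α β C : Type*} [LinearOrder α] [LinearOrder β]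

structure DenseColoring (c : α → C) : Prop where
  exists_between : ∀ i {x y}, x < y → ∃ m, c m = i ∧ x < m ∧ m < y
  exists_gt : ∀ i x, ∃ m, c m = i ∧ x < m
  exists_lt : ∀ i x, ∃ m, c m = i ∧ m < x

namespace DenseColoring

variable {c : α → C}

theorem exists_between_finsets [Nonempty α] (hc : DenseColoring c) (i : C) (lo hi : Finset α)
    (lo_lt_hi : ∀ x ∈ lo, ∀ y ∈ hi, x < y) :
    ∃ m, c m = i ∧ (∀ x ∈ lo, x < m) ∧ ∀ y ∈ hi, m < y := by
  rcases lo.eq_empty_or_nonempty with rfl | hlo <;> rcases hi.eq_empty_or_nonempty with rfl | hhi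
  · obtain ⟨m, hm, -⟩ := hc.exists_gt i (Classical.arbitrary α)
    exact ⟨m, hm, by simp, by simp⟩
  · obtain ⟨m, hm, h⟩ := hc.exists_lt i (hi.min' hhi)
    exact ⟨m, hm, by simp, fun y hy => h.trans_le (hi.min'_le y hy)⟩
  · obtain ⟨m, hm, h⟩ := hc.exists_gt i (lo.max' hlo)
    exact ⟨m, hm, fun x hx => (lo.le_max' x hx).trans_lt h, by simp⟩
  · obtain ⟨m, hm, h₁, h₂⟩ :=
      hc.exists_between i (lo_lt_hi _ (lo.max'_mem hlo) _ (hi.min'_mem hhi))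
    exact ⟨m, hm, fun x hx => (lo.le_max' x hx).trans_lt h₁,
      fun y hy => h₂.trans_le (hi.min'_le y hy)⟩

end DenseColoring

variable (c : α → C) (d : β → C)

/-- The colour-preserving version of `Order.PartialIso`: the back-and-forth argument of
`Order.iso_of_countable_dense` goes through once `exists_across` finds a point of the right
colour. -/
def ColoredPartialIso : Type _ :=
  { f : Order.PartialIso α β // ∀ p ∈ f.val, d p.2 = c p.1 }

namespace ColoredPartialIso

noncomputable instance : Preorder (ColoredPartialIso c d) := Subtype.preorder _

instance : Inhabited (ColoredPartialIso c d) :=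
  ⟨⟨default, fun _ h => (Finset.notMem_empty _ h).elim⟩⟩

variable {c d}

theorem exists_across [Nonempty β] (hd : DenseColoring d) (f : ColoredPartialIso c d) (a : α) :
    ∃ b, d b = c a ∧ ∀ p ∈ f.val.val, cmp p.1 a = cmp p.2 b := by
  by_cases h : ∃ b, (a, b) ∈ f.val.val
  · obtain ⟨b, hb⟩ := h
    exact ⟨b, f.prop _ hb, fun p hp => f.val.prop _ hp _ hb⟩
  have below_lt_above : ∀ x ∈ {p ∈ f.val.val | p.1 < a}.image Prod.snd,
      ∀ y ∈ {p ∈ f.val.val | a < p.1}.image Prod.snd, x < y := by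
    simp only [Finset.mem_image, Finset.mem_filter]
    rintro _ ⟨p, ⟨hp, hpa⟩, rfl⟩ _ ⟨q, ⟨hq, haq⟩, rfl⟩
    rw [← lt_iff_lt_of_cmp_eq_cmp (f.val.prop _ hp _ hq)]
    exact hpa.trans haq
  obtain ⟨b, hb, hlo, hhi⟩ := hd.exists_between_finsets (c a) _ _ below_lt_above
  refine ⟨b, hb, fun p hp => ?_⟩
  have hpa : p.1 ≠ a := fun he => h ⟨p.2, he ▸ hp⟩
  rcases hpa.lt_or_gt with hpa | hpa
  · rw [(cmp_eq_lt_iff _ _).2 hpa, (cmp_eq_lt_iff _ _).2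
      (hlo _ (Finset.mem_image_of_mem _ (Finset.mem_filter.2 ⟨hp, hpa⟩)))]
  · rw [(cmp_eq_gt_iff _ _).2 hpa, (cmp_eq_gt_iff _ _).2
      (hhi _ (Finset.mem_image_of_mem _ (Finset.mem_filter.2 ⟨hp, hpa⟩)))]

protected def comm (f : ColoredPartialIso c d) : ColoredPartialIso d c :=
  ⟨f.val.comm, by
    rintro _ hp
    obtain ⟨⟨a, b⟩, hab, rfl⟩ := Finset.mem_image.1 hp
    exact (f.prop _ hab).symm⟩

theorem mem_comm_iff {f : ColoredPartialIso c d} {a : α} {b : β} :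
    (b, a) ∈ f.comm.val.val ↔ (a, b) ∈ f.val.val := by
  refine ⟨fun h => ?_, fun h => Finset.mem_image_of_mem _ h⟩
  obtain ⟨⟨a', b'⟩, h', he⟩ := Finset.mem_image.1 h
  cases he
  exact h'

variable (c d)

def definedAtLeft [Nonempty β] (hd : DenseColoring d) (a : α) :
    Order.Cofinal (ColoredPartialIso c d) where
  carrier := {f | ∃ b, (a, b) ∈ f.val.val}
  isCofinal f := by
    obtain ⟨b, hb, a_b⟩ := exists_across hd f a
    refine ⟨⟨⟨insert (a, b) f.val.val, fun p hp q hq => ?_⟩, fun p hp => ?_⟩,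
      ⟨b, Finset.mem_insert_self _ _⟩, Finset.subset_insert _ _⟩
    · rw [Finset.mem_insert] at hp hq
      rcases hp with rfl | hp <;> rcases hq with rfl | hq
      · simp only [cmp_self_eq_eq]
      · rw [cmp_eq_cmp_symm]
        exact a_b _ hq
      · exact a_b _ hp
      · exact f.val.prop _ hp _ hq
    · rcases Finset.mem_insert.1 hp with rfl | hp
      exacts [hb, f.prop _ hp]

def definedAtRight [Nonempty α] (hc : DenseColoring c) (b : β) :
    Order.Cofinal (ColoredPartialIso c d) where
  carrier := {f | ∃ a, (a, b) ∈ f.val.val}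
  isCofinal f := by
    obtain ⟨f', ⟨a, ha⟩, hf⟩ := (definedAtLeft d c hc b).isCofinal f.comm
    exact ⟨f'.comm, ⟨a, mem_comm_iff.2 ha⟩, fun _ hp => mem_comm_iff.2 (hf (mem_comm_iff.2 hp))⟩

end ColoredPartialIso

open ColoredPartialIso in
theorem DenseColoring.exists_orderIso [Countable α] [Countable β] [Nonempty α] [Nonempty β]
    {c : α → C} {d : β → C} (hc : DenseColoring c) (hd : DenseColoring d) :
    ∃ e : α ≃o β, ∀ a, d (e a) = c a := by
  cases nonempty_encodable α
  cases nonempty_encodable β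
  let D : α ⊕ β → Order.Cofinal (ColoredPartialIso c d) :=
    Sum.elim (definedAtLeft c d hd) (definedAtRight c d hc)
  let I := Order.idealOfCofinals default D
  have hF : ∀ a, ∃ b, ∃ f ∈ I, (a, b) ∈ f.val.val := fun a => by
    obtain ⟨f, ⟨b, hb⟩, hf⟩ := Order.cofinal_meets_idealOfCofinals default D (Sum.inl a)
    exact ⟨b, f, hf, hb⟩
  have hG : ∀ b, ∃ a, ∃ f ∈ I, (a, b) ∈ f.val.val := fun b => by
    obtain ⟨f, ⟨a, ha⟩, hf⟩ := Order.cofinal_meets_idealOfCofinals default D (Sum.inr b)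
    exact ⟨a, f, hf, ha⟩
  choose F hF using hF
  choose G hG using hG
  refine ⟨OrderIso.ofCmpEqCmp F G fun a b => ?_, fun a => ?_⟩
  · obtain ⟨f, hf, ha⟩ := hF a
    obtain ⟨g, hg, hb⟩ := hG b
    obtain ⟨m, -, fm, gm⟩ := I.directed _ hf _ hg
    exact m.val.prop (a, _) (fm ha) (_, b) (gm hb)
  · obtain ⟨f, -, ha⟩ := hF a
    exact f.prop _ ha

open Sigma.Lex

theorem denseColoring_sigmaLex_snd {ι X : Type*} [LinearOrder ι] [NoMinOrder ι] [NoMaxOrder ι]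
    [LinearOrder X] [Nonempty X] {c : X → C}
    (between : ∀ i {x y : X}, x < y → ∃ m, c m = i ∧ x < m ∧ m < y)
    (gt : ∀ i x, ∃ m, c m = i ∧ x < m) :
    DenseColoring fun p : Σₗ _ : ι, X => c p.2 := by
  have exists_color (i : C) : ∃ m, c m = i := (gt i (Classical.arbitrary X)).imp fun _ => And.left
  refine ⟨fun i => ?_, fun i ⟨k, _⟩ => ?_, fun i ⟨k, _⟩ => ?_⟩
  · rintro ⟨k, x⟩ ⟨l, y⟩ h
    obtain h | ⟨hkl, h⟩ := Sigma.Lex.lt_def.1 h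
    · obtain ⟨m, hm, hxm⟩ := gt i x
      exact ⟨toLex ⟨k, m⟩, hm, toLex_mk_lt_toLex_mk hxm, toLex_lt_toLex_of_fst_lt _ _ h⟩
    · dsimp only at hkl h
      subst hkl
      obtain ⟨m, hm, hxm, hmy⟩ := between i h
      exact ⟨toLex ⟨k, m⟩, hm, toLex_mk_lt_toLex_mk hxm, toLex_mk_lt_toLex_mk hmy⟩
  · obtain ⟨k', hk⟩ := NoMaxOrder.exists_gt k
    obtain ⟨m, hm⟩ := exists_color i
    exact ⟨toLex ⟨k', m⟩, hm, toLex_lt_toLex_of_fst_lt _ _ hk⟩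
  · obtain ⟨k', hk⟩ := NoMinOrder.exists_lt k
    obtain ⟨m, hm⟩ := exists_color i
    exact ⟨toLex ⟨k', m⟩, hm, toLex_lt_toLex_of_fst_lt _ _ hk⟩

theorem DenseColoring.sigmaLex_unit_sumLex {ι : Type*} [LinearOrder ι] [NoMinOrder ι]
    [NoMaxOrder ι] [Nonempty α] {c : α → C} (hc : DenseColoring c) (i₀ : C) :
    DenseColoring fun p : Σₗ _ : ι, Unit ⊕ₗ α => Sum.elim (fun _ => i₀) c (ofLex p.2) := by
  refine denseColoring_sigmaLex_snd (fun i => ?_) fun i => ?_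
  · rintro (u | a) (u' | b) h
    · exact absurd (Sum.Lex.inl_lt_inl_iff.1 h) (lt_irrefl _)
    · obtain ⟨m, hm, hmb⟩ := hc.exists_lt i b
      exact ⟨toLex (inr m), hm, Sum.Lex.inl_lt_inr _ _, Sum.Lex.inr_lt_inr_iff.2 hmb⟩
    · exact absurd h Sum.Lex.not_inr_lt_inl
    · obtain ⟨m, hm, ham, hmb⟩ := hc.exists_between i (Sum.Lex.inr_lt_inr_iff.1 h)
      exact ⟨toLex (inr m), hm, Sum.Lex.inr_lt_inr_iff.2 ham, Sum.Lex.inr_lt_inr_iff.2 hmb⟩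
  · rintro (u | a)
    · obtain ⟨m, hm, -⟩ := hc.exists_gt i (Classical.arbitrary α)
      exact ⟨toLex (inr m), hm, Sum.Lex.inl_lt_inr _ _⟩
    · obtain ⟨m, hm, ham⟩ := hc.exists_gt i a
      exact ⟨toLex (inr m), hm, Sum.Lex.inr_lt_inr_iff.2 ham⟩

theorem DenseColoring.nonempty_orderIso_sigmaLex_int [Countable α] [Nonempty α] {c : α → C}
    (hc : DenseColoring c) (L : C → Type*) [∀ i, LinearOrder (L i)] (i₀ : C) :
    Nonempty ((Σₗ a, L (c a)) ≃o Σₗ _ : ℤ, L i₀ ⊕ₗ Σₗ a, L (c a)) := by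
  let g : (Σₗ _ : ℤ, Unit ⊕ₗ α) → C := fun p => Sum.elim (fun _ => i₀) c (ofLex p.2)
  have : Countable (Σₗ _ : ℤ, Unit ⊕ₗ α) := inferInstanceAs (Countable (Σ _ : ℤ, Unit ⊕ α))
  have : Nonempty (Σₗ _ : ℤ, Unit ⊕ₗ α) := ⟨toLex ⟨0, toLex (inl ())⟩⟩
  obtain ⟨e, he⟩ := hc.exists_orderIso (hc.sigmaLex_unit_sumLex (ι := ℤ) i₀)
  exact ⟨(OrderIso.sigmaLexCongr e fun a => (he a).symm ▸ OrderIso.refl (L (c a))).trans <|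
    (OrderIso.sigmaLexAssoc fun k y => L (g (toLex ⟨k, y⟩))).trans <|
    OrderIso.sigmaLexCongrRight fun k => (OrderIso.sigmaLexSumLexDistrib _).trans <|
    OrderIso.sumLexCongr (OrderIso.uniqueSigmaLex _) (OrderIso.refl _)⟩

end Coloring

theorem denseColoring_of_denseQ {C : Type*} {f : ℚ → C} (hf : ∀ i, DenseQ (f ⁻¹' {i})) :
    DenseColoring f where
  exists_between i _ _ h := hf i _ _ h
  exists_gt i x := (hf i x (x + 1) (by linarith)).imp fun _ ⟨hm, h, _⟩ => ⟨hm, h⟩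
  exists_lt i x := (hf i (x - 1) x (by linarith)).imp fun _ ⟨hm, _, h⟩ => ⟨hm, h⟩

theorem shuffle_zeta_general {n : ℕ} (L : Fin n → Type*) [∀ i, LinearOrder (L i)]
    (f : ℚ → Fin n) (hf : ∀ i : Fin n, DenseQ (f ⁻¹' {i})) (j : Fin n)
    (L1 L2 : Type*) [LinearOrder L1] [LinearOrder L2]
    (hj : Nonempty (L j ≃o (L1 ⊕ₗ L2))) :
    Nonempty ((ℤ ×ₗ (L2 ⊕ₗ ((Σₗ q : ℚ, L (f q)) ⊕ₗ L1))) ≃o (Σₗ q : ℚ, L (f q))) := by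
  obtain ⟨eL⟩ := hj
  obtain ⟨e⟩ := (denseColoring_of_denseQ hf).nonempty_orderIso_sigmaLex_int L j
  let Ξ := Σₗ q : ℚ, L (f q)
  exact ⟨OrderIso.symm <| e.trans <|
    (OrderIso.sigmaLexCongrRight fun _ =>
      (OrderIso.sumLexCongr eL (OrderIso.refl Ξ)).trans (OrderIso.sumLexAssoc L1 L2 Ξ)).trans <|
    (OrderIso.sigmaLexIntSumLexComm _ _).trans <|
    (OrderIso.sigmaLexCongrRight fun _ => OrderIso.sumLexAssoc L2 Ξ L1).trans <|
    OrderIso.sigmaLexEquivProdLex _⟩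

/-- if `L_j ≅ L_{j1} + L_{j2}` then
`(L_{j2} + Ξ(L₁,…,Lₙ) + L_{j1}) · ζ ≅ Ξ(L₁,…,Lₙ)`. -/
theorem shuffle_zeta {n : ℕ} (hn : 1 ≤ n) (L : Fin n → Type*) [∀ i, LinearOrder (L i)]
    (f : ℚ → Fin n) (hf : ∀ i : Fin n, DenseQ (f ⁻¹' {i})) (j : Fin n)
    (L1 L2 : Type*) [LinearOrder L1] [LinearOrder L2]
    (hj : Nonempty (L j ≃o (L1 ⊕ₗ L2))) :
    Nonempty ((ℤ ×ₗ (L2 ⊕ₗ ((Σₗ q : ℚ, L (f q)) ⊕ₗ L1))) ≃o (Σₗ q : ℚ, L (f q))) :=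
  shuffle_zeta_general L f hf j L1 L2 hj
end

section
/- Let L₀ and L₁ be functions from ℤ to linear orders such that: L₀(k) ∈ dLO_fp¹¹ for every k ≥ 0 and L₀(k) = 𝟎 for every k < 0; L₁(k) ∈ dLO_fp¹¹ for every k ≤ 0 and L₁(k) = 𝟎 for every k > 0; there exist s₀ ≥ 0 and p₀ > 0 with L₀(s₀ + p₀ + k) ≅ L₀(s₀ + k) for every k ∈ ℕ; and there exist s'₁ ≤ 0 and p'₁ > 0 with L₁(s'₁ − p'₁ − k) ≅ L₁(s'₁ − k) for every k ∈ ℕ. Then Σ_{k∈ℤ} L₀(k) + Σ_{k∈ℤ} L₁(k) belongs to dLO_fp¹¹. -/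
/-- Bundled linear orders (in `Type 0`). -/
structure BLinOrd : Type 1 where
  carrier : Type
  [str : LinearOrder carrier]

attribute [instance] BLinOrd.str

/-- The bundled linear order on a given type. -/
def BLinOrd.of (α : Type) [LinearOrder α] : BLinOrd := ⟨α⟩

/-- The class of finitely presented linear orders: the smallest class of linear orders
containing `𝟎` and `𝟏` that is closed under order isomorphism, binary order sums,
and the anti-lexicographic products `L·ω` and `L·ω*`. -/
inductive LOfp : BLinOrd → Prop
  | empty : LOfp (BLinOrd.of (Fin 0))
  | one : LOfp (BLinOrd.of (Fin 1))
  | iso {X Y : BLinOrd} : LOfp X → Nonempty (X.carrier ≃o Y.carrier) → LOfp Y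
  | add {X Y : BLinOrd} : LOfp X → LOfp Y → LOfp (BLinOrd.of (X.carrier ⊕ₗ Y.carrier))
  | mulOmega {X : BLinOrd} : LOfp X → LOfp (BLinOrd.of (ℕ ×ₗ X.carrier))
  | mulOmegaStar {X : BLinOrd} : LOfp X → LOfp (BLinOrd.of (ℕᵒᵈ ×ₗ X.carrier))

/-- A linear order is discrete if every non-maximal element has an immediate successor
and every non-minimal element has an immediate predecessor. -/
def IsDiscreteLO (α : Type*) [LinearOrder α] : Prop :=
  (∀ a : α, (∃ b, a < b) → ∃ b, a ⋖ b) ∧ (∀ a : α, (∃ b, b < a) → ∃ b, b ⋖ a)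

/-- Bounded discrete finitely presented linear orders: discrete members of `LOfp` with a
minimum element and a maximum element. -/
def dLOfp11 (X : BLinOrd) : Prop :=
  LOfp X ∧ IsDiscreteLO X.carrier ∧
    (∃ a : X.carrier, ∀ x, a ≤ x) ∧ (∃ a : X.carrier, ∀ x, x ≤ a)

/-! Since `L₀` vanishes on negative indices, `A = Σ_k L₀(k)` is an `ω`-sum of bounded discrete
orders; such a sum is discrete with a minimum and no maximum, and eventual periodicity (from `s`,
with period `p`) splits it as `L₀(0) + ⋯ + L₀(s-1) + (L₀(s) + ⋯ + L₀(s+p-1))·ω`, so it is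
finitely presented. Reversing both the order and the indices turns `B = Σ_k L₁(k)` into such a
sum, so `B` is finitely presented and discrete with a maximum and no minimum. In `A + B` every
element of `A` keeps its successor in `A` and every element of `B` its predecessor in `B`, so
`A + B` is discrete, bounded by the minimum of `A` and the maximum of `B`. -/

open OrderDual

section Discrete

variable {α β : Type*} [LinearOrder α] [LinearOrder β]

theorem IsDiscreteLO.of_orderIso (e : α ≃o β) (h : IsDiscreteLO α) : IsDiscreteLO β := by
  refine ⟨fun b ⟨c, hc⟩ => ?_, fun b ⟨c, hc⟩ => ?_⟩
  · obtain ⟨d, hd⟩ := h.1 (e.symm b) ⟨e.symm c, e.symm.strictMono hc⟩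
    exact ⟨e d, by simpa using (apply_covBy_apply_iff e).2 hd⟩
  · obtain ⟨d, hd⟩ := h.2 (e.symm b) ⟨e.symm c, e.symm.strictMono hc⟩
    exact ⟨e d, by simpa using (apply_covBy_apply_iff e).2 hd⟩

theorem IsDiscreteLO.dual (h : IsDiscreteLO α) : IsDiscreteLO αᵒᵈ :=
  ⟨fun a ⟨b, hb⟩ =>
    let ⟨c, hc⟩ := h.2 (ofDual a) ⟨ofDual b, hb⟩
    ⟨toDual c, hc.toDual⟩,
  fun a ⟨b, hb⟩ =>
    let ⟨c, hc⟩ := h.1 (ofDual a) ⟨ofDual b, hb⟩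
    ⟨toDual c, hc.toDual⟩⟩

theorem Sum.Lex.inl_covBy_inl {x y : α} (h : x ⋖ y) :
    toLex (Sum.inl x : α ⊕ β) ⋖ toLex (Sum.inl y) := by
  refine ⟨Sum.Lex.inl h.lt, ?_⟩
  rintro (c | c) hxc hcy
  · exact h.2 (Sum.Lex.inl_lt_inl_iff.1 hxc) (Sum.Lex.inl_lt_inl_iff.1 hcy)
  · exact Sum.Lex.not_inr_lt_inl hcy

theorem Sum.Lex.inr_covBy_inr {x y : β} (h : x ⋖ y) :
    toLex (Sum.inr x : α ⊕ β) ⋖ toLex (Sum.inr y) := by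
  refine ⟨Sum.Lex.inr h.lt, ?_⟩
  rintro (c | c) hxc hcy
  · exact Sum.Lex.not_inr_lt_inl hxc
  · exact h.2 (Sum.Lex.inr_lt_inr_iff.1 hxc) (Sum.Lex.inr_lt_inr_iff.1 hcy)

theorem IsDiscreteLO.sumLex [NoMaxOrder α] [NoMinOrder β] (hα : IsDiscreteLO α)
    (hβ : IsDiscreteLO β) : IsDiscreteLO (α ⊕ₗ β) := by
  constructor
  · rintro (a | b) ⟨c, hc⟩
    · obtain ⟨a', ha'⟩ := hα.1 a (exists_gt a)
      exact ⟨_, Sum.Lex.inl_covBy_inl ha'⟩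
    · rcases c with c | c
      · exact absurd hc Sum.Lex.not_inr_lt_inl
      · obtain ⟨b', hb'⟩ := hβ.1 b ⟨c, Sum.Lex.inr_lt_inr_iff.1 hc⟩
        exact ⟨_, Sum.Lex.inr_covBy_inr hb'⟩
  · rintro (a | b) ⟨c, hc⟩
    · rcases c with c | c
      · obtain ⟨a', ha'⟩ := hα.2 a ⟨c, Sum.Lex.inl_lt_inl_iff.1 hc⟩
        exact ⟨_, Sum.Lex.inl_covBy_inl ha'⟩
      · exact absurd hc Sum.Lex.not_inr_lt_inl
    · obtain ⟨b', hb'⟩ := hβ.2 b (exists_lt b)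
      exact ⟨_, Sum.Lex.inr_covBy_inr hb'⟩

end Discrete

section SigmaLex

variable {ι : Type*} [LinearOrder ι] {α : ι → Type*} [∀ i, LinearOrder (α i)]

theorem Sigma.Lex.mk_covBy_mk {i : ι} {x y : α i} (h : x ⋖ y) :
    (toLex ⟨i, x⟩ : Σₗ i, α i) ⋖ toLex ⟨i, y⟩ := by
  refine ⟨Sigma.Lex.right _ _ h.lt, ?_⟩
  rintro ⟨j, z⟩ (⟨_, _, hij⟩ | ⟨_, _, hxz⟩) hzy
  · rcases hzy with ⟨_, _, hji⟩ | ⟨_, _, -⟩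
    · exact lt_asymm hij hji
    · exact lt_irrefl _ hij
  · rcases hzy with ⟨_, _, hii⟩ | ⟨_, _, hzy⟩
    · exact lt_irrefl _ hii
    · exact h.2 hxz hzy

theorem Sigma.Lex.mk_covBy_mk_of_isMax_of_isMin {i j : ι} (hij : i ⋖ j) {x : α i} {y : α j}
    (hx : IsMax x) (hy : IsMin y) : (toLex ⟨i, x⟩ : Σₗ i, α i) ⋖ toLex ⟨j, y⟩ := by
  refine ⟨Sigma.Lex.left _ _ hij.lt, ?_⟩
  rintro ⟨k, z⟩ (⟨_, _, hik⟩ | ⟨_, _, hxz⟩) hzy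
  · rcases hzy with ⟨_, _, hkj⟩ | ⟨_, _, hzy⟩
    · exact hij.2 hik hkj
    · exact hy.not_lt hzy
  · exact hx.not_lt hxz

end SigmaLex

theorem IsDiscreteLO.sigmaLex_nat {M : ℕ → Type*} [∀ n, LinearOrder (M n)]
    (hM : ∀ n, IsDiscreteLO (M n)) (hbot : ∀ n, ∃ a : M n, IsBot a)
    (htop : ∀ n, ∃ a : M n, IsTop a) : IsDiscreteLO (Σₗ n, M n) := by
  constructor
  · rintro ⟨n, x⟩ -
    by_cases hx : ∃ y, x < y
    · obtain ⟨y, hxy⟩ := (hM n).1 x hx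
      exact ⟨_, Sigma.Lex.mk_covBy_mk hxy⟩
    · obtain ⟨m, hm⟩ := hbot (n + 1)
      exact ⟨_, Sigma.Lex.mk_covBy_mk_of_isMax_of_isMin (Order.covBy_add_one n)
        (isMax_iff_forall_not_lt.2 (not_exists.1 hx)) hm.isMin⟩
  · rintro ⟨n, x⟩ ⟨⟨k, c⟩, hc⟩
    by_cases hx : ∃ y, y < x
    · obtain ⟨y, hyx⟩ := (hM n).2 x hx
      exact ⟨_, Sigma.Lex.mk_covBy_mk hyx⟩
    · obtain ⟨n, rfl⟩ : ∃ n', n = n' + 1 := by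
        rcases hc with ⟨_, _, hkn⟩ | ⟨_, _, hcx⟩
        · exact Nat.exists_eq_add_one.2 (Nat.zero_lt_of_lt hkn)
        · exact absurd ⟨c, hcx⟩ hx
      obtain ⟨m, hm⟩ := htop n
      exact ⟨_, Sigma.Lex.mk_covBy_mk_of_isMax_of_isMin (Order.covBy_add_one n) hm.isMax
        (isMin_iff_forall_not_lt.2 (not_exists.1 hx))⟩

def OrderIso.prodLexDualDistrib (α β : Type*) [Preorder α] [Preorder β] :
    (α ×ₗ β)ᵒᵈ ≃o αᵒᵈ ×ₗ βᵒᵈ where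
  toEquiv := ofDual.trans (ofLex.trans ((Equiv.prodCongr toDual toDual).trans toLex))
  map_rel_iff' := by simp [Prod.Lex.le_iff, eq_comm]

theorem LOfp.dual {X : BLinOrd} (h : LOfp X) : LOfp (BLinOrd.of X.carrierᵒᵈ) := by
  induction h with
  | empty => exact LOfp.empty.iso ⟨Fin.revOrderIso.symm⟩
  | one => exact LOfp.one.iso ⟨Fin.revOrderIso.symm⟩
  | iso _ e ih => exact ih.iso ⟨e.some.dual⟩
  | @add X Y _ _ ihX ihY =>
    exact (ihY.add ihX).iso ⟨(OrderIso.sumLexDualAntidistrib X.carrier Y.carrier).symm⟩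
  | @mulOmega X _ ih =>
    exact ih.mulOmegaStar.iso ⟨(OrderIso.prodLexDualDistrib ℕ X.carrier).symm⟩
  | @mulOmegaStar X _ ih =>
    exact ih.mulOmega.iso ⟨((OrderIso.prodLexDualDistrib ℕᵒᵈ X.carrier).trans
      (Prod.Lex.prodLexCongr (OrderIso.dualDual ℕ).symm (OrderIso.refl _))).symm⟩

section NatSums

variable (M : ℕ → Type*) [∀ n, LinearOrder (M n)]

noncomputable def sigmaLexFinSuccIso (n : ℕ) :
    (Σₗ i : Fin n, M i) ⊕ₗ M n ≃o Σₗ i : Fin (n + 1), M i := by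
  refine StrictMono.orderIsoOfSurjective (fun z => match ofLex z with
    | .inl w => toLex ⟨Fin.castSucc (ofLex w).1, (ofLex w).2⟩
    | .inr y => toLex ⟨Fin.last n, y⟩) ?_ ?_
  · rintro (⟨i, x⟩ | x) (⟨j, y⟩ | y) h
    · rcases Sum.Lex.inl_lt_inl_iff.1 h with ⟨_, _, hij⟩ | ⟨_, _, hxy⟩
      · exact Sigma.Lex.left _ _ (Fin.castSucc_lt_castSucc_iff.2 hij)
      · exact Sigma.Lex.right _ _ hxy
    · exact Sigma.Lex.left _ _ (Fin.castSucc_lt_last i)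
    · exact absurd h Sum.Lex.not_inr_lt_inl
    · exact Sigma.Lex.right _ _ (Sum.Lex.inr_lt_inr_iff.1 h)
  · rintro ⟨i, x⟩
    rcases Fin.eq_castSucc_or_eq_last i with ⟨i, rfl⟩ | rfl
    · exact ⟨toLex (.inl (toLex ⟨i, x⟩)), rfl⟩
    · exact ⟨toLex (.inr x), rfl⟩

noncomputable def sigmaLexNatSplitIso (s : ℕ) :
    (Σₗ i : Fin s, M i) ⊕ₗ (Σₗ n, M (s + n)) ≃o Σₗ n, M n := by
  refine StrictMono.orderIsoOfSurjective (fun z => match ofLex z with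
    | .inl w => toLex ⟨(ofLex w).1, (ofLex w).2⟩
    | .inr w => toLex ⟨s + (ofLex w).1, (ofLex w).2⟩) ?_ ?_
  · rintro (⟨i, x⟩ | ⟨m, x⟩) (⟨j, y⟩ | ⟨n, y⟩) h
    · rcases Sum.Lex.inl_lt_inl_iff.1 h with ⟨_, _, hij⟩ | ⟨_, _, hxy⟩
      · exact Sigma.Lex.left _ _ hij
      · exact Sigma.Lex.right _ _ hxy
    · exact Sigma.Lex.left _ _ (Nat.lt_add_right n i.isLt)
    · exact absurd h Sum.Lex.not_inr_lt_inl
    · rcases Sum.Lex.inr_lt_inr_iff.1 h with ⟨_, _, hmn⟩ | ⟨_, _, hxy⟩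
      · exact Sigma.Lex.left _ _ (Nat.add_lt_add_left hmn s)
      · exact Sigma.Lex.right _ _ hxy
  · rintro ⟨n, x⟩
    rcases lt_or_ge n s with hn | hn
    · exact ⟨toLex (.inl (toLex ⟨⟨n, hn⟩, x⟩)), rfl⟩
    · obtain ⟨m, rfl⟩ := Nat.exists_eq_add_of_le hn
      exact ⟨toLex (.inr (toLex ⟨m, x⟩)), rfl⟩

theorem nonempty_orderIso_mul_add_of_periodic {p : ℕ}
    (hper : ∀ k, Nonempty (M (p + k) ≃o M k)) : ∀ m k, Nonempty (M (m * p + k) ≃o M k)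
  | 0, k => by rw [zero_mul, zero_add]; exact ⟨OrderIso.refl _⟩
  | m + 1, k => by
    rw [show (m + 1) * p + k = p + (m * p + k) by ring]
    exact ⟨(hper _).some.trans (nonempty_orderIso_mul_add_of_periodic hper m k).some⟩

noncomputable def sigmaLexNatIsoOfPeriodic {p : ℕ} (hp : 0 < p)
    (e : ∀ m j, M (m * p + j) ≃o M j) : ℕ ×ₗ (Σₗ j : Fin p, M j) ≃o Σₗ n, M n := by
  refine StrictMono.orderIsoOfSurjective (fun z =>
    toLex ⟨(ofLex z).1 * p + (ofLex (ofLex z).2).1, (e _ _).symm (ofLex (ofLex z).2).2⟩) ?_ ?_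
  · rintro ⟨m₁, j₁, x₁⟩ ⟨m₂, j₂, x₂⟩
      (⟨_, _, hm⟩ | ⟨_, ⟨_, _, hj⟩ | ⟨_, _, hx⟩⟩)
    · exact Sigma.Lex.left _ _ (show m₁ * p + j₁ < m₂ * p + j₂ by nlinarith [j₁.isLt])
    · exact Sigma.Lex.left _ _ (Nat.add_lt_add_left hj _)
    · exact Sigma.Lex.right _ _ ((e _ _).symm.strictMono hx)
  · rintro ⟨n, x⟩
    obtain ⟨m, j, hj, rfl⟩ : ∃ m j, j < p ∧ n = m * p + j :=
      ⟨n / p, n % p, Nat.mod_lt n hp, (Nat.div_add_mod' n p).symm⟩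
    exact ⟨toLex (m, toLex ⟨⟨j, hj⟩, e m j x⟩),
      congrArg (fun y : M (m * p + j) => toLex (⟨_, y⟩ : Σ n, M n))
        ((e m j).symm_apply_apply x)⟩

end NatSums

theorem LOfp.sigmaLex_fin (M : ℕ → BLinOrd) (hM : ∀ n, LOfp (M n)) :
    ∀ n, LOfp (BLinOrd.of (Σₗ i : Fin n, (M i).carrier))
  | 0 => LOfp.empty.iso ⟨@OrderIso.ofIsEmpty _ _ _ _ (inferInstanceAs (IsEmpty (Fin 0)))
      ⟨fun x => (ofLex x).1.elim0⟩⟩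
  | n + 1 => ((LOfp.sigmaLex_fin M hM n).add (hM n)).iso
      ⟨sigmaLexFinSuccIso (fun i => (M i).carrier) n⟩

theorem LOfp.sigmaLex_nat_of_periodic (M : ℕ → BLinOrd) (hM : ∀ n, LOfp (M n)) {s p : ℕ}
    (hp : 0 < p) (hper : ∀ k : ℕ, Nonempty ((M (s + p + k)).carrier ≃o (M (s + k)).carrier)) :
    LOfp (BLinOrd.of (Σₗ n, (M n).carrier)) := by
  have e : ∀ m j, (M (s + (m * p + j))).carrier ≃o (M (s + j)).carrier := fun m j =>
    (nonempty_orderIso_mul_add_of_periodic (fun n => (M (s + n)).carrier)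
      (fun k => by rw [← add_assoc]; exact hper k) m j).some
  have tail : LOfp (BLinOrd.of (Σₗ n, (M (s + n)).carrier)) :=
    (LOfp.sigmaLex_fin (fun j => M (s + j)) (fun j => hM _) p).mulOmega.iso
      ⟨sigmaLexNatIsoOfPeriodic (fun n => (M (s + n)).carrier) hp e⟩
  exact ((LOfp.sigmaLex_fin M hM s).add tail).iso
    ⟨sigmaLexNatSplitIso (fun n => (M n).carrier) s⟩

def dLOfp10 (X : BLinOrd) : Prop :=
  LOfp X ∧ IsDiscreteLO X.carrier ∧ (∃ a : X.carrier, ∀ x, a ≤ x) ∧ NoMaxOrder X.carrier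

theorem dLOfp10.of_orderIso {X Y : BLinOrd} (h : dLOfp10 X) (e : X.carrier ≃o Y.carrier) :
    dLOfp10 Y := by
  obtain ⟨hfp, hdisc, ⟨a, ha⟩, hmax⟩ := h
  refine ⟨hfp.iso ⟨e⟩, hdisc.of_orderIso e, ⟨e a, fun y => e.le_symm_apply.1 (ha _)⟩,
    ⟨fun y => ?_⟩⟩
  obtain ⟨x, hx⟩ := exists_gt (e.symm y)
  exact ⟨e x, e.symm_apply_lt.1 hx⟩

theorem dLOfp11.dual {X : BLinOrd} (h : dLOfp11 X) : dLOfp11 (BLinOrd.of X.carrierᵒᵈ) :=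
  let ⟨hfp, hdisc, ⟨a, ha⟩, ⟨b, hb⟩⟩ := h
  ⟨hfp.dual, hdisc.dual, ⟨toDual b, hb⟩, ⟨toDual a, ha⟩⟩

theorem dLOfp10_sigmaLex_nat (M : ℕ → BLinOrd) (hM : ∀ n, dLOfp11 (M n)) {s p : ℕ}
    (hp : 0 < p)
    (hper : ∀ k : ℕ, Nonempty ((M (s + p + k)).carrier ≃o (M (s + k)).carrier)) :
    dLOfp10 (BLinOrd.of (Σₗ n, (M n).carrier)) := by
  have : ∀ n, Nonempty (M n).carrier := fun n => ⟨(hM n).2.2.1.choose⟩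
  obtain ⟨a, ha⟩ := (hM 0).2.2.1
  refine ⟨LOfp.sigmaLex_nat_of_periodic M (fun n => (hM n).1) hp hper,
    IsDiscreteLO.sigmaLex_nat (fun n => (hM n).2.1) (fun n => (hM n).2.2.1)
      (fun n => (hM n).2.2.2),
    ⟨toLex ⟨0, a⟩, ?_⟩, inferInstanceAs (NoMaxOrder (Σₗ n, (M n).carrier))⟩
  rintro ⟨n, x⟩
  rcases n.eq_zero_or_pos with rfl | hn
  · exact Sigma.Lex.right _ _ (ha x)
  · exact le_of_lt (Sigma.Lex.left _ _ hn)

noncomputable def sigmaLexNatIsoInt (M : ℤ → Type*) [∀ k, LinearOrder (M k)]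
    (hM : ∀ k : ℤ, k < 0 → IsEmpty (M k)) : (Σₗ n : ℕ, M n) ≃o Σₗ k : ℤ, M k := by
  refine StrictMono.orderIsoOfSurjective (fun z => toLex ⟨(ofLex z).1, (ofLex z).2⟩) ?_ ?_
  · rintro ⟨m, x⟩ ⟨n, y⟩ (⟨_, _, hmn⟩ | ⟨_, _, hxy⟩)
    · exact Sigma.Lex.left _ _ (Int.ofNat_lt.2 hmn)
    · exact Sigma.Lex.right _ _ hxy
  · rintro ⟨k, x⟩
    lift k to ℕ using le_of_not_gt fun hk => (hM k hk).false x
    exact ⟨toLex ⟨k, x⟩, rfl⟩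

theorem dLOfp10_sigmaLex_int (L : ℤ → BLinOrd) (hcls : ∀ k : ℤ, 0 ≤ k → dLOfp11 (L k))
    (hemp : ∀ k : ℤ, k < 0 → IsEmpty (L k).carrier)
    (hper : ∃ s : ℤ, 0 ≤ s ∧ ∃ p : ℤ, 0 < p ∧
      ∀ k : ℕ, Nonempty ((L (s + p + k)).carrier ≃o (L (s + k)).carrier)) :
    dLOfp10 (BLinOrd.of (Σₗ k : ℤ, (L k).carrier)) := by
  obtain ⟨s, hs, p, hp, hper⟩ := hper
  lift s to ℕ using hs
  lift p to ℕ using hp.le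
  refine (dLOfp10_sigmaLex_nat (fun n => L n) (fun n => hcls n n.cast_nonneg) (s := s)
    (Int.natCast_pos.1 hp) (fun k => ?_)).of_orderIso (sigmaLexNatIsoInt _ hemp)
  simpa using hper k

noncomputable def sigmaLexNegDualIso (M : ℤ → Type*) [∀ k, LinearOrder (M k)] :
    (Σₗ k : ℤ, (M (-k))ᵒᵈ) ≃o (Σₗ k : ℤ, M k)ᵒᵈ := by
  refine StrictMono.orderIsoOfSurjective
    (fun z => toDual (toLex ⟨-(ofLex z).1, ofDual (ofLex z).2⟩)) ?_ ?_
  · rintro ⟨i, x⟩ ⟨j, y⟩ (⟨_, _, hij⟩ | ⟨_, _, hxy⟩)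
    · exact Sigma.Lex.left _ _ (neg_lt_neg hij)
    · exact Sigma.Lex.right _ _ hxy
  · rintro ⟨k, x⟩
    obtain ⟨k, rfl⟩ : ∃ k', k = -k' := ⟨-k, (neg_neg k).symm⟩
    exact ⟨toLex ⟨k, toDual x⟩, rfl⟩

theorem dLOfp11_sumLex {α β : Type} [LinearOrder α] [LinearOrder β]
    (hα : dLOfp10 (BLinOrd.of α)) (hβ : dLOfp10 (BLinOrd.of βᵒᵈ)) :
    dLOfp11 (BLinOrd.of (α ⊕ₗ β)) := by
  obtain ⟨hαfp, hαdisc, ⟨a, ha⟩, hαmax⟩ := hα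
  obtain ⟨hβfp, hβdisc, ⟨b, hb⟩, hβmin⟩ := hβ
  have : NoMaxOrder α := hαmax
  have : NoMinOrder β :=
    ⟨fun x => let ⟨y, hy⟩ := hβmin.exists_gt (toDual x); ⟨ofDual y, hy⟩⟩
  refine ⟨hαfp.add (hβfp.dual.iso (Y := BLinOrd.of β) ⟨(OrderIso.dualDual β).symm⟩),
    hαdisc.sumLex (hβdisc.dual.of_orderIso (OrderIso.dualDual β).symm),
    ⟨toLex (.inl a), ?_⟩, ⟨toLex (.inr (ofDual b)), ?_⟩⟩
  · rintro (x | y)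
    · exact Sum.Lex.inl (ha x)
    · exact Sum.Lex.sep _ _
  · rintro (x | y)
    · exact Sum.Lex.sep _ _
    · exact Sum.Lex.inr (hb (toDual y))

/-- the `n = 0` (finitely presented) version of the recursive reconstruction
lemma. -/
theorem recursive_reconstruction_fp (L0 L1 : ℤ → BLinOrd)
    (h0cls : ∀ k : ℤ, 0 ≤ k → dLOfp11 (L0 k))
    (h0emp : ∀ k : ℤ, k < 0 → IsEmpty (L0 k).carrier)
    (h1cls : ∀ k : ℤ, k ≤ 0 → dLOfp11 (L1 k))
    (h1emp : ∀ k : ℤ, 0 < k → IsEmpty (L1 k).carrier)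
    (hper0 : ∃ s : ℤ, 0 ≤ s ∧ ∃ p : ℤ, 0 < p ∧
      ∀ k : ℕ, Nonempty ((L0 (s + p + k)).carrier ≃o (L0 (s + k)).carrier))
    (hper1 : ∃ s : ℤ, s ≤ 0 ∧ ∃ p : ℤ, 0 < p ∧
      ∀ k : ℕ, Nonempty ((L1 (s - p - k)).carrier ≃o (L1 (s - k)).carrier)) :
    dLOfp11 (BLinOrd.of ((Σₗ k : ℤ, (L0 k).carrier) ⊕ₗ (Σₗ k : ℤ, (L1 k).carrier))) := by
  let L1' : ℤ → BLinOrd := fun k => BLinOrd.of (L1 (-k)).carrierᵒᵈ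
  have hper1' : ∃ s : ℤ, 0 ≤ s ∧ ∃ p : ℤ, 0 < p ∧
      ∀ k : ℕ, Nonempty ((L1' (s + p + k)).carrier ≃o (L1' (s + k)).carrier) := by
    obtain ⟨s, hs, p, hp, hper⟩ := hper1
    refine ⟨-s, by omega, p, hp, fun k => ?_⟩
    show Nonempty ((L1 (-(-s + p + k))).carrierᵒᵈ ≃o (L1 (-(-s + k))).carrierᵒᵈ)
    rw [show -(-s + p + k) = s - p - k by ring, show -(-s + k) = s - k by ring]
    exact ⟨(hper k).some.dual⟩
  have hA := dLOfp10_sigmaLex_int L0 h0cls h0emp hper0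
  have hB := dLOfp10_sigmaLex_int L1' (fun k hk => (h1cls (-k) (by omega)).dual)
    (fun k hk => ⟨fun x => (h1emp (-k) (by omega)).false (ofDual x)⟩) hper1'
  exact dLOfp11_sumLex hA (hB.of_orderIso (sigmaLexNegDualIso fun k => (L1 k).carrier))
end
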